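/- arXiv:math/0305220 — 3 statements merged into one kernel-verified Lean document; each statement's English description precedes it below -/
import Mathlib

section
/- Let B : ℝ → ℝ satisfy B(ω+1) = B(ω) for all ω ∈ ℝ and B(ω) = -log ω + ω·B(1/ω) for every irrational ω ∈ (0,1). Let γ = (√5−1)/2, ω_k = 1/(k+γ) for k ≥ 1, and let εc : ℝ → ℝ be any positive function such that for some constant C₁ > 0 one has |log εc(ω_k) + B(ω_k)| ≤ C₁ for all k ≥ 1. Then there exist constants 0 < c ≤ C such that c/k ≤ εc(ω_k) ≤ C/k for all k ≥ 1. -/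
/-!
Since `1/ω_k = k + γ` and `B` is `1`-periodic, the functional equation gives
`B(ω_k) = log (k + γ) + B(γ)/(k + γ)`. The second term is bounded by `|B(γ)|`, so Bryuno's
interpolation formula says that `log (εc(ω_k) · (k + γ))` stays bounded, and `k ≤ k + γ ≤ 2k`.
-/

open Real goldenRatio

theorem bryuno_one_div_natCast_add {B : ℝ → ℝ} (hper : Function.Periodic B 1)
    (heq : ∀ ω : ℝ, ω ∈ Set.Ioo (0:ℝ) 1 → Irrational ω → B ω = -log ω + ω * B (1 / ω))
    {x : ℝ} (hx : x ∈ Set.Ioo (0:ℝ) 1) (hxirr : Irrational x) {k : ℕ} (hk : 1 ≤ k) :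
    B (1 / (k + x)) = log (k + x) + B x / (k + x) := by
  have hkx : 1 < (k : ℝ) + x := by
    have : (1 : ℝ) ≤ k := by exact_mod_cast hk
    linarith [hx.1]
  have hmem : 1 / ((k : ℝ) + x) ∈ Set.Ioo (0:ℝ) 1 :=
    ⟨by positivity, (div_lt_one (by positivity)).2 hkx⟩
  have hirr : Irrational (1 / ((k : ℝ) + x)) := by
    simpa using (hxirr.natCast_add k).inv
  rw [heq _ hmem hirr, one_div_one_div, add_comm (k : ℝ) x, ← mul_one (k : ℝ), hper.nat_mul k x,
    mul_one, one_div, log_inv]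
  ring

theorem exists_inv_natCast_scaling_of_abs_log_mul_le {f a : ℕ → ℝ} {M : ℝ}
    (hf : ∀ k, 0 < f k) (ha : ∀ k : ℕ, 1 ≤ k → k ≤ a k ∧ a k ≤ 2 * k)
    (hlog : ∀ k : ℕ, 1 ≤ k → |log (f k * a k)| ≤ M) :
    ∃ c C : ℝ, 0 < c ∧ c ≤ C ∧ ∀ k : ℕ, 1 ≤ k → c / k ≤ f k ∧ f k ≤ C / k := by
  have hM : 0 ≤ M := (abs_nonneg _).trans (hlog 1 le_rfl)
  refine ⟨exp (-M) / 2, exp M, by positivity, ?_, fun k hk => ?_⟩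
  · have : exp (-M) ≤ exp M := exp_le_exp.2 (by linarith)
    linarith [exp_pos (-M)]
  have hk0 : (0 : ℝ) < k := by exact_mod_cast hk
  obtain ⟨hka, hak⟩ := ha k hk
  have hfa : 0 < f k * a k := mul_pos (hf k) (hk0.trans_le hka)
  obtain ⟨hlo, hup⟩ := abs_le.1 (hlog k hk)
  rw [le_log_iff_exp_le hfa] at hlo
  rw [log_le_iff_le_exp hfa] at hup
  constructor
  · rw [div_div, div_le_iff₀ (by positivity)]
    nlinarith [hf k]
  · rw [le_div_iff₀ hk0]
    nlinarith [hf k]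

theorem critical_function_scaling_near_zero_general (B : ℝ → ℝ)
    (hper : ∀ ω : ℝ, B (ω + 1) = B ω)
    (heq : ∀ ω : ℝ, ω ∈ Set.Ioo (0:ℝ) 1 → Irrational ω →
      B ω = -Real.log ω + ω * B (1 / ω))
    (εc : ℝ → ℝ) (hpos : ∀ ω : ℝ, 0 < εc ω)
    (C₁ : ℝ)
    (hbound : ∀ k : ℕ, 1 ≤ k →
      |Real.log (εc (1 / ((k : ℝ) + (Real.sqrt 5 - 1) / 2))) +
        B (1 / ((k : ℝ) + (Real.sqrt 5 - 1) / 2))| ≤ C₁) :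
    ∃ c C : ℝ, 0 < c ∧ c ≤ C ∧ ∀ k : ℕ, 1 ≤ k →
      c / (k : ℝ) ≤ εc (1 / ((k : ℝ) + (Real.sqrt 5 - 1) / 2)) ∧
      εc (1 / ((k : ℝ) + (Real.sqrt 5 - 1) / 2)) ≤ C / (k : ℝ) := by
  set γ : ℝ := (√5 - 1) / 2
  have hγ_eq : γ = -ψ := by ring
  have hγ : γ ∈ Set.Ioo (0 : ℝ) 1 :=
    ⟨by linarith [goldenConj_neg], by linarith [neg_one_lt_goldenConj]⟩
  have hγirr : Irrational γ := hγ_eq ▸ goldenConj_irrational.neg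
  have hγ_shift : ∀ k : ℕ, 1 ≤ k → (k : ℝ) ≤ k + γ ∧ (k : ℝ) + γ ≤ 2 * k := fun k hk =>
    ⟨by linarith [hγ.1], by linarith [hγ.2, (Nat.one_le_cast (α := ℝ)).2 hk]⟩
  refine exists_inv_natCast_scaling_of_abs_log_mul_le (a := fun k => k + γ) (M := C₁ + |B γ|)
    (fun _ => hpos _) hγ_shift fun k hk => ?_
  have hkγ : 1 < (k : ℝ) + γ := by linarith [hγ.1, (Nat.one_le_cast (α := ℝ)).2 hk]
  have hB := hbound k hk
  rw [bryuno_one_div_natCast_add hper heq hγ hγirr hk] at hB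
  rw [log_mul (hpos _).ne' (by positivity)]
  calc |log (εc (1 / (k + γ))) + log (k + γ)|
      = |(log (εc (1 / (k + γ))) + (log (k + γ) + B γ / (k + γ))) - B γ / (k + γ)| := by
        congr 1; ring
    _ ≤ C₁ + |B γ / (k + γ)| := (abs_sub _ _).trans (add_le_add_left hB _)
    _ ≤ C₁ + |B γ| := by
      rw [abs_div, abs_of_pos (by positivity : 0 < (k : ℝ) + γ)]
      gcongr
      exact div_le_self (abs_nonneg _) hkγ.le

/-- If `εc` is a positive function satisfying Bryuno's interpolation formula
`|log εc(ω_k) + B(ω_k)| ≤ C₁` along the sequence `ω_k = 1/(k+γ)` for a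
Bryuno-type function `B`, then `εc(ω_k)` scales as `1/k`:
there are constants `0 < c ≤ C` with `c/k ≤ εc(ω_k) ≤ C/k` for all `k ≥ 1`. -/
theorem critical_function_scaling_near_zero (B : ℝ → ℝ)
    (hper : ∀ ω : ℝ, B (ω + 1) = B ω)
    (heq : ∀ ω : ℝ, ω ∈ Set.Ioo (0:ℝ) 1 → Irrational ω →
      B ω = -Real.log ω + ω * B (1 / ω))
    (εc : ℝ → ℝ) (hpos : ∀ ω : ℝ, 0 < εc ω)
    (C₁ : ℝ) (hC₁ : 0 < C₁)
    (hbound : ∀ k : ℕ, 1 ≤ k →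
      |Real.log (εc (1 / ((k : ℝ) + (Real.sqrt 5 - 1) / 2))) +
        B (1 / ((k : ℝ) + (Real.sqrt 5 - 1) / 2))| ≤ C₁) :
    ∃ c C : ℝ, 0 < c ∧ c ≤ C ∧ ∀ k : ℕ, 1 ≤ k →
      c / (k : ℝ) ≤ εc (1 / ((k : ℝ) + (Real.sqrt 5 - 1) / 2)) ∧
      εc (1 / ((k : ℝ) + (Real.sqrt 5 - 1) / 2)) ≤ C / (k : ℝ) :=
  critical_function_scaling_near_zero_general B hper heq εc hpos C₁ hbound
end

section
/- Let B : ℝ → ℝ satisfy B(ω+1) = B(ω) for all ω ∈ ℝ and B(ω) = -log ω + ω·B(1/ω) for every irrational ω ∈ (0,1). Let γ = (√5−1)/2, a_k = 2^(k²)+γ, ω̃_k = 1/(k + 1/a_k) for k ≥ 1, and let εc : ℝ → ℝ be any positive function such that for some constant C₁ > 0 one has |log εc(ω̃_k) + B(ω̃_k)| ≤ C₁ for all k ≥ 1. Then there exists a constant C > 0 such that εc(ω̃_k) ≤ C·2^(−k)/k for all k ≥ 1. -/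
/-!
Along `ω̃_k = 1 / (k + 1 / a_k)` the continued fraction of `ω̃_k` is `[0; k, 2^(k²), 1, 1, …]`, so two
steps of the functional equation and periodicity give
`B(ω̃_k) = log (k + 1/a_k) + ω̃_k (log a_k + B(γ) / a_k)`.
The huge partial quotient `a_k ≈ 2^(k²)` contributes `ω̃_k log a_k ≳ k² log 2 / (k + 1) ≥ (k - 1) log 2`,
so `B(ω̃_k) ≥ log k + k log 2 - O(1)`, and the interpolation formula `log εc ≈ -B` turns this into
`εc(ω̃_k) = O(2^(-k) / k)`.
-/

open Real Set Function

structure IsBryunoType (B : ℝ → ℝ) : Prop where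
  periodic : Periodic B 1
  functional_eq : ∀ ω ∈ Ioo (0 : ℝ) 1, Irrational ω → B ω = -log ω + ω * B (1 / ω)

noncomputable def tildeOmega (γ : ℝ) (k : ℕ) : ℝ := 1 / (k + 1 / (2 ^ (k ^ 2) + γ))

lemma sqrt_five_sub_one_div_two_eq_neg_goldenConj : (√5 - 1) / 2 = -goldenConj := by
  rw [goldenConj]; ring

lemma irrational_sqrt_five_sub_one_div_two : Irrational ((√5 - 1) / 2) :=
  sqrt_five_sub_one_div_two_eq_neg_goldenConj ▸ goldenConj_irrational.neg

lemma sqrt_five_sub_one_div_two_mem_Ioo : (√5 - 1) / 2 ∈ Ioo (0 : ℝ) 1 := by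
  rw [sqrt_five_sub_one_div_two_eq_neg_goldenConj]
  exact ⟨neg_pos.mpr goldenConj_neg, by linarith [neg_one_lt_goldenConj]⟩

namespace IsBryunoType

variable {B : ℝ → ℝ}

lemma apply_natCast_add (hB : IsBryunoType B) (k : ℕ) (x : ℝ) : B (k + x) = B x := by
  simpa [add_comm] using hB.periodic.nat_mul k x

lemma apply_one_div_natCast_add (hB : IsBryunoType B) {k : ℕ} (hk : 1 ≤ k) {x : ℝ}
    (hx : x ∈ Ioo (0 : ℝ) 1) (hirr : Irrational x) :
    B (1 / (k + x)) = log (k + x) + B x / (k + x) := by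
  have hkx : 1 < (k : ℝ) + x := by
    have : (1 : ℝ) ≤ k := by exact_mod_cast hk
    linarith [hx.1]
  have hmem : 1 / ((k : ℝ) + x) ∈ Ioo (0 : ℝ) 1 :=
    ⟨by positivity, (div_lt_one (by linarith)).mpr hkx⟩
  have hirr' : Irrational (1 / ((k : ℝ) + x)) := by
    simpa only [one_div] using (hirr.natCast_add k).inv
  rw [hB.functional_eq _ hmem hirr', one_div_one_div, hB.apply_natCast_add, log_div one_ne_zero
    (by linarith), log_one]
  ring

lemma log_add_sub_le_apply_tildeOmega (hB : IsBryunoType B) {γ : ℝ} (hγ : γ ∈ Ioo (0 : ℝ) 1)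
    (hγirr : Irrational γ) {k : ℕ} (hk : 1 ≤ k) :
    log k + (k - 1) * log 2 - |B γ| ≤ B (tildeOmega γ k) := by
  set a : ℝ := 2 ^ (k ^ 2) + γ with ha
  have hk1 : (1 : ℝ) ≤ k := by exact_mod_cast hk
  have hpow : (1 : ℝ) ≤ 2 ^ (k ^ 2) := one_le_pow₀ one_le_two
  have ha1 : 1 < a := by linarith [hγ.1]
  have hx : 1 / a ∈ Ioo (0 : ℝ) 1 := ⟨by positivity, (div_lt_one (by linarith)).mpr ha1⟩
  have hxirr : Irrational (1 / a) := by
    have : Irrational a := by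
      simpa [ha, add_comm] using hγirr.natCast_add (2 ^ (k ^ 2))
    simpa only [one_div] using this.inv
  have hBx : B (1 / a) = log a + B γ / a := by
    have := hB.apply_one_div_natCast_add (Nat.one_le_two_pow (n := k ^ 2)) hγ hγirr
    simpa [ha] using this
  have hω : B (tildeOmega γ k) = log (k + 1 / a) + log a / (k + 1 / a) +
      B γ / (a * (k + 1 / a)) := by
    rw [tildeOmega, hB.apply_one_div_natCast_add hk hx hxirr, hBx]
    field_simp
    ring
  have hd : (k : ℝ) < k + 1 / a := by linarith [hx.1]
  have hlog : log k ≤ log (k + 1 / a) := log_le_log (by positivity) hd.le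
  have hloga : (k - 1) * log 2 ≤ log a / (k + 1 / a) := by
    have hsq : (k : ℝ) ^ 2 * log 2 ≤ log a := by
      have : log ((2 : ℝ) ^ (k ^ 2)) ≤ log a := log_le_log (by positivity) (by linarith [hγ.1])
      rwa [log_pow, Nat.cast_pow] at this
    have hquot : (k - 1) * (k + 1 / a) ≤ (k : ℝ) ^ 2 := by nlinarith [hx.2]
    rw [le_div_iff₀ (by positivity)]
    nlinarith [mul_le_mul_of_nonneg_right hquot (log_nonneg one_le_two)]
  have hγterm : -|B γ| ≤ B γ / (a * (k + 1 / a)) := by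
    have hden : 1 ≤ a * (k + 1 / a) := by
      rw [mul_add, mul_one_div_cancel (by positivity)]
      nlinarith
    have : |B γ / (a * (k + 1 / a))| ≤ |B γ| := by
      rw [abs_div, abs_of_pos (show 0 < a * (k + 1 / a) by linarith)]
      exact div_le_self (abs_nonneg _) hden
    linarith [neg_abs_le (B γ / (a * (k + 1 / a)))]
  linarith

end IsBryunoType

lemma le_exp_mul_two_rpow_neg_div_of_log_add_le {ε b C c k : ℝ} (hk : 0 < k) (hε : 0 < ε)
    (hlog : log ε + b ≤ C) (hb : log k + k * log 2 - c ≤ b) :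
    ε ≤ exp (C + c) * 2 ^ (-k) / k := by
  have h2k : (2 : ℝ) ^ (-k) / k = exp (-k * log 2 - log k) := by
    rw [rpow_def_of_pos two_pos, exp_sub, exp_log hk, mul_comm]
  calc ε = exp (log ε) := (exp_log hε).symm
    _ ≤ exp (C + c + (-k * log 2 - log k)) := exp_le_exp.mpr (by linarith)
    _ = exp (C + c) * 2 ^ (-k) / k := by rw [mul_div_assoc, h2k, exp_add]

theorem critical_function_fast_decay_general (B : ℝ → ℝ)
    (hper : ∀ ω : ℝ, B (ω + 1) = B ω)
    (heq : ∀ ω : ℝ, ω ∈ Set.Ioo (0:ℝ) 1 → Irrational ω →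
      B ω = -Real.log ω + ω * B (1 / ω))
    (εc : ℝ → ℝ) (hpos : ∀ ω : ℝ, 0 < εc ω)
    (C₁ : ℝ)
    (hbound : ∀ k : ℕ, 1 ≤ k →
      |Real.log (εc (1 / ((k : ℝ) + 1 / ((2 : ℝ) ^ (k ^ 2) + (Real.sqrt 5 - 1) / 2)))) +
        B (1 / ((k : ℝ) + 1 / ((2 : ℝ) ^ (k ^ 2) + (Real.sqrt 5 - 1) / 2)))| ≤ C₁) :
    ∃ C : ℝ, 0 < C ∧ ∀ k : ℕ, 1 ≤ k →
      εc (1 / ((k : ℝ) + 1 / ((2 : ℝ) ^ (k ^ 2) + (Real.sqrt 5 - 1) / 2))) ≤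
        C * (2 : ℝ) ^ (-(k : ℝ)) / (k : ℝ) := by
  have hB : IsBryunoType B := ⟨hper, heq⟩
  refine ⟨exp (C₁ + (|B ((√5 - 1) / 2)| + log 2)), exp_pos _, fun k hk => ?_⟩
  have hlower := hB.log_add_sub_le_apply_tildeOmega sqrt_five_sub_one_div_two_mem_Ioo
    irrational_sqrt_five_sub_one_div_two hk
  refine le_exp_mul_two_rpow_neg_div_of_log_add_le (by exact_mod_cast hk) (hpos _)
    (abs_le.mp (hbound k hk)).2 ?_
  rw [tildeOmega] at hlower
  linarith

/-- If `εc` is a positive function satisfying Bryuno's interpolation formula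
`|log εc(ω̃_k) + B(ω̃_k)| ≤ C₁` along the sequence `ω̃_k = 1/(k + 1/(2^(k²)+γ))`
for a Bryuno-type function `B`, then `εc(ω̃_k)` tends to zero exponentially fast:
there is `C > 0` with `εc(ω̃_k) ≤ C * 2^(-k) / k` for all `k ≥ 1`. -/
theorem critical_function_fast_decay (B : ℝ → ℝ)
    (hper : ∀ ω : ℝ, B (ω + 1) = B ω)
    (heq : ∀ ω : ℝ, ω ∈ Set.Ioo (0:ℝ) 1 → Irrational ω →
      B ω = -Real.log ω + ω * B (1 / ω))
    (εc : ℝ → ℝ) (hpos : ∀ ω : ℝ, 0 < εc ω)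
    (C₁ : ℝ) (hC₁ : 0 < C₁)
    (hbound : ∀ k : ℕ, 1 ≤ k →
      |Real.log (εc (1 / ((k : ℝ) + 1 / ((2 : ℝ) ^ (k ^ 2) + (Real.sqrt 5 - 1) / 2)))) +
        B (1 / ((k : ℝ) + 1 / ((2 : ℝ) ^ (k ^ 2) + (Real.sqrt 5 - 1) / 2)))| ≤ C₁) :
    ∃ C : ℝ, 0 < C ∧ ∀ k : ℕ, 1 ≤ k →
      εc (1 / ((k : ℝ) + 1 / ((2 : ℝ) ^ (k ^ 2) + (Real.sqrt 5 - 1) / 2))) ≤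
        C * (2 : ℝ) ^ (-(k : ℝ)) / (k : ℝ) :=
  critical_function_fast_decay_general B hper heq εc hpos C₁ hbound
end

section
/- Let B : ℝ → ℝ satisfy B(ω+1) = B(ω) for all ω ∈ ℝ and B(ω) = -log ω + ω·B(1/ω) for every irrational ω ∈ (0,1). Fix a natural number q ≥ 1, let γ = (√5−1)/2 and ω_n = 1/(q + 1/(n+γ)) for n ≥ 1, and set η_n = |ω_n − 1/q|. Then there exist constants 0 < c ≤ C (depending on q and B(γ)) such that c·e^(−q·B(ω_n)) ≤ η_n ≤ C·e^(−q·B(ω_n)) for all n ≥ 1. -/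
/-!
Write `t = n + γ` and `ω = 1/(q + 1/t)`. Applying the Bryuno functional equation twice, at `ω`
and at `1/t`, and periodicity in between, gives
`B ω = log (q + 1/t) + ω (log t + B γ / t)`, while `|ω - 1/q| = ω / (q t)`. Hence
`log |ω - 1/q| + q B ω = (q - 1) log (q + 1/t) - log q - ω log t / t + q ω B γ / t`,
and each term on the right stays bounded uniformly in `n`: `q + 1/t ∈ (q, q + 1]`, `log t ≤ t`
and `q ω < 1`.
-/

open Real

theorem Function.Periodic.natCast_add_eq {α β : Type*} [NonAssocSemiring α] {f : α → β}
    (h : Function.Periodic f 1) (n : ℕ) (x : α) : f (n + x) = f x := by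
  simpa [add_comm] using h.nat_mul n x

theorem abs_one_div_add_one_div_sub_one_div {q t : ℝ} (hq : 0 < q) (ht : 0 < t) :
    |1 / (q + 1 / t) - 1 / q| = 1 / (q * (q + 1 / t) * t) := by
  have hdiff : 1 / q - 1 / (q + 1 / t) = 1 / (q * (q + 1 / t) * t) := by
    field_simp
    ring
  rw [abs_sub_comm, hdiff, abs_of_pos (by positivity)]

theorem exp_mul_exp_neg_le_and_le_of_log_add_mem_Icc {η x a b : ℝ} (hη : 0 < η)
    (h : log η + x ∈ Set.Icc a b) : exp a * exp (-x) ≤ η ∧ η ≤ exp b * exp (-x) := by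
  rw [← exp_add, ← exp_add, ← le_log_iff_exp_le hη, ← log_le_iff_le_exp hη]
  exact ⟨by linarith [h.1], by linarith [h.2]⟩

section Bryuno

variable {B : ℝ → ℝ}

theorem bryuno_one_div_of_one_lt
    (heq : ∀ ω : ℝ, ω ∈ Set.Ioo (0:ℝ) 1 → Irrational ω → B ω = -log ω + ω * B (1 / ω))
    {y : ℝ} (hy : 1 < y) (hirr : Irrational y) : B (1 / y) = log y + B y / y := by
  have hmem : 1 / y ∈ Set.Ioo (0:ℝ) 1 :=
    ⟨one_div_pos.2 (by linarith), (div_lt_one (by linarith)).2 hy⟩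
  rw [heq _ hmem (by simpa [one_div] using hirr.inv), one_div_one_div, one_div, log_inv, neg_neg,
    inv_mul_eq_div]

theorem bryuno_one_div_natCast_add_one_div (hper : Function.Periodic B 1)
    (heq : ∀ ω : ℝ, ω ∈ Set.Ioo (0:ℝ) 1 → Irrational ω → B ω = -log ω + ω * B (1 / ω))
    {q : ℕ} (hq : 1 ≤ q) {t : ℝ} (ht : 1 < t) (hirr : Irrational t) :
    B (1 / (q + 1 / t)) = log (q + 1 / t) + (log t + B t / t) / (q + 1 / t) := by
  have hq1 : (1:ℝ) ≤ q := by exact_mod_cast hq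
  have hirr_s : Irrational (q + 1 / t) := by simpa [one_div] using hirr.inv.natCast_add q
  rw [bryuno_one_div_of_one_lt heq (by linarith [one_div_pos.2 (by linarith : 0 < t)]) hirr_s,
    hper.natCast_add_eq q (1 / t), bryuno_one_div_of_one_lt heq ht hirr]

theorem log_dist_add_mul_bryuno_mem_Icc (hper : Function.Periodic B 1)
    (heq : ∀ ω : ℝ, ω ∈ Set.Ioo (0:ℝ) 1 → Irrational ω → B ω = -log ω + ω * B (1 / ω))
    {q : ℕ} (hq : 1 ≤ q) {t : ℝ} (ht : 1 < t) (hirr : Irrational t) :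
    log |1 / (q + 1 / t) - 1 / q| + q * B (1 / (q + 1 / t)) ∈
      Set.Icc ((q - 2) * log q - 1 - |B t|) ((q - 1) * log (q + 1) - log q + |B t|) := by
  have hq1 : (1:ℝ) ≤ q := by exact_mod_cast hq
  have ht0 : 0 < t := by linarith
  have hinv : 0 < 1 / t ∧ 1 / t ≤ 1 := ⟨one_div_pos.2 ht0, (div_le_one ht0).2 ht.le⟩
  rw [bryuno_one_div_natCast_add_one_div hper heq hq ht hirr,
    abs_one_div_add_one_div_sub_one_div (by positivity) ht0]
  set s := (q:ℝ) + 1 / t with hs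
  have hs0 : 0 < s := by linarith
  have hst : s * t = q * t + 1 := by
    rw [hs]
    field_simp
  have hexpand : log (1 / (q * s * t)) + q * (log s + (log t + B t / t) / s) =
      (q - 1) * log s - log q - log t / (s * t) + q / (s * t) * B t := by
    rw [one_div, log_inv, log_mul (by positivity) ht0.ne', log_mul (by positivity) hs0.ne', hs]
    field_simp
    ring
  have hlog_s : (q - 1) * log q ≤ (q - 1) * log s ∧ (q - 1) * log s ≤ (q - 1) * log (q + 1) :=
    ⟨by gcongr; linarith, by gcongr; linarith⟩
  have hlog_t : 0 ≤ log t / (s * t) ∧ log t / (s * t) ≤ 1 := by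
    refine ⟨div_nonneg (log_nonneg ht.le) (by positivity), (div_le_one (by positivity)).2 ?_⟩
    nlinarith [log_le_sub_one_of_pos ht0]
  have hcoef : |q / (s * t) * B t| ≤ |B t| := by
    rw [abs_mul, abs_of_pos (by positivity)]
    refine mul_le_of_le_one_left (abs_nonneg _) ((div_le_one (by positivity)).2 ?_)
    nlinarith
  rw [hexpand]
  constructor <;> nlinarith [abs_le.1 hcoef]

end Bryuno

/-- For a Bryuno-type function `B` and the rotation numbers
`ω_n = 1/(q + 1/(n+γ))` tending to the resonance `1/q`, the distance
`η_n = |ω_n - 1/q|` to the resonance is comparable with `e^(-q·B(ω_n))`. -/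
theorem distance_to_resonance_comparable (B : ℝ → ℝ)
    (hper : ∀ ω : ℝ, B (ω + 1) = B ω)
    (heq : ∀ ω : ℝ, ω ∈ Set.Ioo (0:ℝ) 1 → Irrational ω →
      B ω = -Real.log ω + ω * B (1 / ω))
    (q : ℕ) (hq : 1 ≤ q) :
    ∃ c C : ℝ, 0 < c ∧ c ≤ C ∧ ∀ n : ℕ, 1 ≤ n →
      c * Real.exp (-(q : ℝ) * B (1 / ((q : ℝ) + 1 / ((n : ℝ) + (Real.sqrt 5 - 1) / 2)))) ≤
        |1 / ((q : ℝ) + 1 / ((n : ℝ) + (Real.sqrt 5 - 1) / 2)) - 1 / (q : ℝ)| ∧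
      |1 / ((q : ℝ) + 1 / ((n : ℝ) + (Real.sqrt 5 - 1) / 2)) - 1 / (q : ℝ)| ≤
        C * Real.exp (-(q : ℝ) * B (1 / ((q : ℝ) + 1 / ((n : ℝ) + (Real.sqrt 5 - 1) / 2)))) := by
  set γ := (√5 - 1) / 2 with hγ_def
  have hγ : γ = -goldenConj := by rw [hγ_def, goldenConj]; ring
  have hγ_irr : Irrational γ := hγ ▸ goldenConj_irrational.neg
  have hq0 : (0:ℝ) < q := by exact_mod_cast hq
  refine ⟨exp ((q - 2) * log q - 1 - |B γ|), exp ((q - 1) * log (q + 1) - log q + |B γ|),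
    exp_pos _, exp_le_exp.2 ?_, fun n hn => ?_⟩
  · have hlog : log q ≤ log (q + 1) := log_le_log hq0 (by linarith)
    have hq1 : (1:ℝ) ≤ q := by exact_mod_cast hq
    nlinarith [abs_nonneg (B γ)]
  have ht : 1 < (n:ℝ) + γ := by
    have hn1 : (1:ℝ) ≤ n := by exact_mod_cast hn
    linarith [neg_pos.2 goldenConj_neg]
  have hmem := log_dist_add_mul_bryuno_mem_Icc hper heq hq ht (hγ_irr.natCast_add n)
  rw [Function.Periodic.natCast_add_eq hper] at hmem
  rw [neg_mul]
  refine exp_mul_exp_neg_le_and_le_of_log_add_mem_Icc ?_ hmem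
  rw [abs_one_div_add_one_div_sub_one_div hq0 (by linarith)]
  positivity
end
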